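/- The polyhedron Ω(y) = {x ∈ ℝ^n : x ≥ 0, Ax ≤ y} is compact for every y ∈ ℝ^m if and only if there exists u ∈ ℝ^m with u ≥ 0 and Aᵀu ≥ e_n, where e_n = (1,...,1) ∈ ℝ^n. -/

import Mathlib

/-!
If `u ≥ 0` and `Aᵀu ≥ e`, then every `x ∈ Ω(y)` satisfies `∑ⱼ xⱼ = eᵀx ≤ uᵀAx ≤ uᵀy`, so `Ω(y)` is
a closed subset of a box. Conversely, `Ω(0)` is a cone, so it is bounded only if it is `{0}`.
Then the compact convex set `{-Ax : x ∈ Δ}`, `Δ` the standard simplex, misses the nonnegative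
orthant, so a separating functional `v ↦ uᵀv` has `u ≥ 0`, and evaluating it at the columns
`-Aδⱼ` gives `Aᵀu > 0`; rescaling `u` gives `Aᵀu ≥ e`.
-/

open Matrix

theorem eq_zero_of_isBounded_of_forall_smul_mem {E : Type*} [NormedAddCommGroup E]
    [NormedSpace ℝ E] {s : Set E} (hs : Bornology.IsBounded s) {x : E}
    (hx : ∀ t : ℝ, 0 ≤ t → t • x ∈ s) : x = 0 := by
  obtain ⟨r, hr⟩ := isBounded_iff_forall_norm_le.1 hs
  by_contra hne
  have hpos : 0 < ‖x‖ := norm_pos_iff.2 hne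
  have hr0 : 0 ≤ r := (norm_nonneg _).trans (hr _ (hx 1 zero_le_one))
  have := hr _ (hx ((r + 1) / ‖x‖) (by positivity))
  rw [norm_smul, Real.norm_of_nonneg (by positivity), div_mul_cancel₀ _ hpos.ne'] at this
  linarith

theorem exists_nonneg_forall_one_le_mul {ι : Type*} [Fintype ι] {v : ι → ℝ}
    (hv : ∀ j, 0 < v j) : ∃ c : ℝ, 0 ≤ c ∧ ∀ j, 1 ≤ c * v j := by
  refine ⟨∑ j, (v j)⁻¹, Finset.sum_nonneg fun j _ => (inv_pos.2 (hv j)).le, fun j => ?_⟩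
  calc 1 = (v j)⁻¹ * v j := (inv_mul_cancel₀ (hv j).ne').symm
    _ ≤ (∑ j, (v j)⁻¹) * v j := by
      gcongr
      · exact (hv j).le
      · exact Finset.single_le_sum (fun j _ => (inv_pos.2 (hv j)).le) (Finset.mem_univ j)

variable {ι κ : Type*} [Fintype ι]

theorem StrongDual.apply_eq_dotProduct [Fintype κ] [DecidableEq κ] (f : StrongDual ℝ (κ → ℝ))
    (v : κ → ℝ) :
    f v = v ⬝ᵥ fun i => f (Pi.single i 1) := by
  conv_lhs => rw [← Finset.univ_sum_single v]
  rw [map_sum, dotProduct]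
  refine Finset.sum_congr rfl fun i _ => ?_
  rw [← smul_eq_mul, ← map_smul, ← Pi.single_smul, smul_eq_mul, mul_one]

namespace Matrix

/-- Ville's theorem of the alternative. -/
theorem exists_nonneg_forall_pos_transpose_mulVec [Fintype κ] (A : Matrix κ ι ℝ)
    (h : ∀ x, 0 ≤ x → A *ᵥ x ≤ 0 → x = 0) :
    ∃ u, 0 ≤ u ∧ ∀ j, 0 < (Aᵀ *ᵥ u) j := by
  classical
  set K := (-A).mulVecLin '' stdSimplex ℝ ι
  have hK_convex : Convex ℝ K := (convex_stdSimplex ℝ ι).linear_image _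
  have hK_compact : IsCompact K :=
    (isCompact_stdSimplex ℝ ι).image (LinearMap.continuous_of_finiteDimensional _)
  have hK_disjoint : Disjoint K (ProperCone.positive ℝ (κ → ℝ)) := by
    refine Set.disjoint_left.2 ?_
    rintro _ ⟨x, ⟨hx_nonneg, hx_sum⟩, rfl⟩ hAx
    have hAx : A *ᵥ x ≤ 0 := by simpa [neg_mulVec] using hAx
    simp [h x hx_nonneg hAx] at hx_sum
  obtain ⟨f, hf_nonneg, hf_neg⟩ :=
    (ProperCone.positive ℝ (κ → ℝ)).hyperplane_separation hK_convex hK_compact hK_disjoint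
  refine ⟨fun i => f (Pi.single i 1), fun i => hf_nonneg _ (by simp), fun j => ?_⟩
  have := hf_neg _ ⟨Pi.single j 1, single_mem_stdSimplex ℝ j, rfl⟩
  rw [StrongDual.apply_eq_dotProduct] at this
  simp only [map_neg, LinearMap.neg_apply, mulVecLin_apply, mulVec_single_one,
    neg_dotProduct, Left.neg_neg_iff] at this
  exact this

theorem exists_nonneg_one_le_transpose_mulVec [Fintype κ] (A : Matrix κ ι ℝ)
    (h : ∀ x, 0 ≤ x → A *ᵥ x ≤ 0 → x = 0) :
    ∃ u, 0 ≤ u ∧ 1 ≤ Aᵀ *ᵥ u := by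
  obtain ⟨u, hu, hAu⟩ := exists_nonneg_forall_pos_transpose_mulVec A h
  obtain ⟨c, hc, hc_one⟩ := exists_nonneg_forall_one_le_mul hAu
  exact ⟨c • u, smul_nonneg hc hu, fun j => by simpa [mulVec_smul] using hc_one j⟩

/-- The set `Ω(y)`. -/
def polyhedron (A : Matrix κ ι ℝ) (y : κ → ℝ) : Set (ι → ℝ) := {x | 0 ≤ x ∧ A *ᵥ x ≤ y}

theorem isClosed_polyhedron (A : Matrix κ ι ℝ) (y : κ → ℝ) : IsClosed (A.polyhedron y) :=
  (isClosed_le continuous_const continuous_id).inter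
    (isClosed_le (continuous_const.matrix_mulVec continuous_id) continuous_const)

theorem smul_mem_polyhedron_zero {A : Matrix κ ι ℝ} {x : ι → ℝ} (hx : x ∈ A.polyhedron 0)
    {t : ℝ} (ht : 0 ≤ t) : t • x ∈ A.polyhedron 0 :=
  ⟨smul_nonneg ht hx.1, by simpa [mulVec_smul] using smul_nonpos_of_nonneg_of_nonpos ht hx.2⟩

theorem sum_le_dotProduct_of_mem_polyhedron [Fintype κ] {A : Matrix κ ι ℝ} {u : κ → ℝ}
    (hu : 0 ≤ u) (hAu : 1 ≤ Aᵀ *ᵥ u) {y : κ → ℝ} {x : ι → ℝ} (hx : x ∈ A.polyhedron y) :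
    ∑ j, x j ≤ u ⬝ᵥ y :=
  calc ∑ j, x j = 1 ⬝ᵥ x := by simp [dotProduct]
    _ ≤ (Aᵀ *ᵥ u) ⬝ᵥ x := dotProduct_le_dotProduct_of_nonneg_right hAu hx.1
    _ = u ⬝ᵥ (A *ᵥ x) := by rw [mulVec_transpose, dotProduct_mulVec]
    _ ≤ u ⬝ᵥ y := dotProduct_le_dotProduct_of_nonneg_left hx.2 hu

theorem isCompact_polyhedron [Fintype κ] {A : Matrix κ ι ℝ} {u : κ → ℝ} (hu : 0 ≤ u)
    (hAu : 1 ≤ Aᵀ *ᵥ u) (y : κ → ℝ) : IsCompact (A.polyhedron y) := by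
  refine isCompact_Icc.of_isClosed_subset (A.isClosed_polyhedron y)
    (fun x hx => ⟨hx.1, fun j => ?_⟩ : _ ⊆ Set.Icc 0 fun _ => u ⬝ᵥ y)
  calc x j ≤ ∑ j, x j := Finset.single_le_sum (fun j _ => hx.1 j) (Finset.mem_univ j)
    _ ≤ u ⬝ᵥ y := sum_le_dotProduct_of_mem_polyhedron hu hAu hx

end Matrix

theorem stmt_1 (m n : ℕ) (A : Matrix (Fin m) (Fin n) ℝ) :
    (∀ y : Fin m → ℝ,
        IsCompact {x : Fin n → ℝ | (∀ j, 0 ≤ x j) ∧ ∀ i, A.mulVec x i ≤ y i}) ↔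
    ∃ u : Fin m → ℝ, (∀ i, 0 ≤ u i) ∧ ∀ j, 1 ≤ A.transpose.mulVec u j := by
  refine ⟨fun h => A.exists_nonneg_one_le_transpose_mulVec fun x hx hAx => ?_,
    fun ⟨u, hu, hAu⟩ => A.isCompact_polyhedron hu hAu⟩
  exact eq_zero_of_isBounded_of_forall_smul_mem (h 0).isBounded
    fun t ht => Matrix.smul_mem_polyhedron_zero ⟨hx, hAx⟩ ht
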